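/- arXiv:2201.06869 — 2 statements merged into one kernel-verified Lean document; each statement's English description precedes it below -/
import Mathlib

section
/- Let j : M → R be a homomorphism of commutative monoids such that every element of R has a positive integer multiple lying in the image of j. Let N be an integral, saturated, sharp commutative monoid (i.e., N is cancellative, n·x ∈ N with x in N^gp implies x ∈ N, and the only unit of N is 0). If f, g : R → N are monoid homomorphisms with f ∘ j = g ∘ j, then f = g. -/
/-!
A saturated sharp submonoid `N` of an abelian group `G` forces `G` to be torsion-free: if
`d • x = 0` with `d > 0`, then `d • x` and `d • (-x)` lie in `N`, so saturation puts `x` and `-x`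
in `N` and sharpness gives `x = 0`. Two homomorphisms into a torsion-free monoid that agree on
`j(M)` agree on every `r`, since they agree on a positive multiple `d • r ∈ j(M)` and `d • ·` is
injective.
-/

theorem AddSubmonoid.isAddTorsionFree_of_saturated_of_sharp {G : Type*} [AddCommGroup G]
    (N : AddSubmonoid G) (hsat : ∀ (x : G) (d : ℕ), 0 < d → d • x ∈ N → x ∈ N)
    (hsharp : ∀ x ∈ N, -x ∈ N → x = 0) : IsAddTorsionFree G where
  nsmul_right_injective d hd x y hxy := by
    have hd : 0 < d := Nat.pos_of_ne_zero hd
    have htors : d • (x - y) = 0 := by simpa [smul_sub, sub_eq_zero] using hxy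
    have hmem : x - y ∈ N := hsat _ d hd (htors ▸ N.zero_mem)
    have hneg : -(x - y) ∈ N := hsat _ d hd (by rw [smul_neg, htors, neg_zero]; exact N.zero_mem)
    exact sub_eq_zero.mp (hsharp _ hmem hneg)

theorem AddMonoidHom.ext_of_exists_nsmul_eq_apply {M R G : Type*} [AddCommMonoid M]
    [AddCommMonoid R] [AddMonoid G] [IsAddTorsionFree G] (j : M →+ R)
    (hj : ∀ r : R, ∃ d : ℕ, 0 < d ∧ ∃ m : M, d • r = j m) {f g : R →+ G}
    (h : f.comp j = g.comp j) : f = g := by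
  ext r
  obtain ⟨d, hd, m, hm⟩ := hj r
  refine nsmul_right_injective hd.ne' ?_
  simp only [← map_nsmul, hm]
  exact DFunLike.congr_fun h m

theorem roots_unique_factorisation_general
    {M R G : Type*} [AddCommMonoid M] [AddCommMonoid R] [AddCommGroup G]
    (N : AddSubmonoid G)
    -- `N` is saturated in its groupification
    (hsat : ∀ (x : G) (d : ℕ), 0 < d → d • x ∈ N → x ∈ N)
    -- `N` is sharp
    (hsharp : ∀ x ∈ N, -x ∈ N → x = 0)
    (j : M →+ R)
    -- every element of `R` has a positive integer multiple in the image of `j`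
    (hj : ∀ r : R, ∃ d : ℕ, 0 < d ∧ ∃ m : M, d • r = j m)
    (f g : R →+ G)
    (h : f.comp j = g.comp j) :
    f = g := by
  have := N.isAddTorsionFree_of_saturated_of_sharp hsat hsharp
  exact j.ext_of_exists_nsmul_eq_apply hj h

theorem roots_unique_factorisation
    {M R G : Type*} [AddCommMonoid M] [AddCommMonoid R] [AddCommGroup G]
    (N : AddSubmonoid G)
    -- `G` is the groupification of `N`
    (hgen : ∀ x : G, ∃ a ∈ N, ∃ b ∈ N, x = a - b)
    -- `N` is saturated in its groupification
    (hsat : ∀ (x : G) (d : ℕ), 0 < d → d • x ∈ N → x ∈ N)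
    -- `N` is sharp
    (hsharp : ∀ x ∈ N, -x ∈ N → x = 0)
    (j : M →+ R)
    -- every element of `R` has a positive integer multiple in the image of `j`
    (hj : ∀ r : R, ∃ d : ℕ, 0 < d ∧ ∃ m : M, d • r = j m)
    (f g : R →+ G)
    (hf : ∀ r : R, f r ∈ N) (hg : ∀ r : R, g r ∈ N)
    (h : f.comp j = g.comp j) :
    f = g :=
  roots_unique_factorisation_general N hsat hsharp j hj f g h
end

section
/- Let G be a finite multigraph and r > 0, and let α be a piecewise linear function on the r-fold subdivision G_r of G, with values in a torsion-free abelian group M containing elements ℓ(e)/r, such that the sum of outgoing slopes of α is divisible by r at every vertex of G_r not in V. Then for any two vertices v, v' of G joined by an edge e of G, the difference α(v) − α(v') is divisible by ℓ(e) in M, i.e., α(v) − α(v') ∈ ℤ·ℓ(e). -/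
/-!
STATEMENT 17: Along an edge of `G` subdivided into `r` segments of length
`lseg = ℓ(e)/r`, if a piecewise linear function `α` (values `a i` at the
successive vertices `u₀, …, u_r`, integer slopes `s i` on the segments) has
outgoing-slope sums divisible by `r` at all interior vertices (i.e.
`r ∣ s(i+1) − s(i)`), then the difference of the values of `α` at the two
endpoints is an integer multiple of `ℓ(e) = r·lseg`.
-/
theorem endpoint_difference_divisible
    {M : Type*} [AddCommGroup M]
    -- `M` is torsion-free
    (htf : ∀ (n : ℤ) (m : M), n ≠ 0 → n • m = 0 → m = 0)
    (r : ℕ) (hr : 0 < r)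
    (lseg : M) (a : ℕ → M) (s : ℕ → ℤ)
    -- piecewise linearity along the subdivided edge
    (ha : ∀ i < r, a (i + 1) - a i = s i • lseg)
    -- the outgoing-slope sum is divisible by `r` at interior vertices
    (hs : ∀ i, i + 1 < r → (r : ℤ) ∣ s (i + 1) - s i) :
    ∃ k : ℤ, a r - a 0 = (k * r) • lseg := by
  -- telescoping: a n - a 0 = (∑ i < n, s i) • lseg for n ≤ r
  have tel : ∀ n ≤ r, a n - a 0 = (∑ i ∈ Finset.range n, s i) • lseg := by
    intro n hn
    induction n with
    | zero => simp
    | succ n ih =>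
      have hn' : n < r := Nat.lt_of_succ_le hn
      have := ha n hn'
      rw [Finset.sum_range_succ, add_smul, ← ih (le_of_lt hn'),
        ← this]
      abel
  -- each s i ≡ s 0 mod r for i < r
  have cong : ∀ i < r, (r : ℤ) ∣ s i - s 0 := by
    intro i hi
    induction i with
    | zero => simp
    | succ i ih =>
      have h1 : (r : ℤ) ∣ s (i + 1) - s i := hs i hi
      have h2 := ih (Nat.lt_of_succ_lt hi)
      have := dvd_add h1 h2
      simpa using this
  have hdvd : (r : ℤ) ∣ ∑ i ∈ Finset.range r, s i := by
    have h1 : (r : ℤ) ∣ ∑ i ∈ Finset.range r, (s i - s 0) :=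
      Finset.dvd_sum fun i hi => cong i (Finset.mem_range.mp hi)
    have h2 : ∑ i ∈ Finset.range r, (s i - s 0)
        = (∑ i ∈ Finset.range r, s i) - r * s 0 := by
      rw [Finset.sum_sub_distrib]
      simp [mul_comm]
    rw [h2] at h1
    have := dvd_add h1 (Dvd.intro (s 0) rfl)
    simpa using this
  obtain ⟨k, hk⟩ := hdvd
  exact ⟨k, by rw [tel r le_rfl, hk, mul_comm]⟩
end
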